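/- arXiv:1802.09878 — 6 statements merged into one kernel-verified Lean document; each statement's English description precedes it below -/
import Mathlib

section
/- Let λ₁,…,λ_m be complex numbers with l distinct values among them, let d ≥ l, and let X♯, Y♯ be the associated (d+1)×m matrices of powers. If λ ∈ {λ₁,…,λ_m}, then the vector p♯ = Σ_{j : λ_j = λ} e_j ∈ ℂ^m (where e_j is the j-th standard basis vector) is nonzero, lies in the row space of X♯, and satisfies Y♯ p♯ = λ · X♯ p♯; that is, p♯ is a right generalized eigenvector of the matrix pencil (X♯, Y♯) corresponding to λ. -/
open Matrix

/-- With X♯, Y♯ the (d+1)×m matrices of powers of λ₁,…,λ_m (l distinct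
values, d ≥ l), if λ ∈ {λ₁,…,λ_m} then p♯ = Σ_{j : λ_j = λ} e_j is nonzero, lies in
the row space of X♯, and satisfies Y♯ p♯ = λ · X♯ p♯, i.e. it is a right generalized
eigenvector of the pencil (X♯, Y♯) corresponding to λ. -/
theorem indicator_is_generalized_eigenvector (m d : ℕ) (μ : Fin m → ℂ) (l : ℕ)
    (hl : l = (Finset.univ.image μ).card) (hd : l ≤ d)
    (Xs Ys : Matrix (Fin (d + 1)) (Fin m) ℂ)
    (hXs : ∀ t j, Xs t j = μ j ^ (t : ℕ))
    (hYs : ∀ t j, Ys t j = μ j ^ ((t : ℕ) + 1))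
    (lam : ℂ) (hlam : lam ∈ Set.range μ)
    (ps : Fin m → ℂ) (hps : ∀ j, ps j = if μ j = lam then 1 else 0) :
    ps ≠ 0 ∧ (∃ c : Fin (d + 1) → ℂ, ps = Xs.transpose.mulVec c) ∧
      Ys.mulVec ps = lam • Xs.mulVec ps := by
  obtain ⟨j0, hj0⟩ := hlam
  refine ⟨?_, ?_, ?_⟩
  · intro h
    have := congrFun h j0
    rw [hps] at this
    simp [hj0] at this
  · -- Lagrange interpolation
    set S : Finset ℂ := Finset.univ.image μ with hS
    set f : Polynomial ℂ :=
      Lagrange.interpolate S id (fun x => if x = lam then 1 else 0) with hf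
    have hdegf : f.degree < S.card := Lagrange.degree_interpolate_lt _ (Set.injOn_id _)
    have hnd : f.natDegree < d + 1 := by
      by_cases hf0 : f = 0
      · simp [hf0]
      · have := (Polynomial.natDegree_lt_iff_degree_lt hf0).mpr hdegf
        omega
    refine ⟨fun t => f.coeff t, funext fun j => ?_⟩
    have heval : f.eval (μ j) = if μ j = lam then 1 else 0 := by
      have hmem : μ j ∈ S := by simp [hS]
      exact Lagrange.eval_interpolate_at_node (fun x => if x = lam then 1 else 0) (Set.injOn_id _) hmem
    have hsum : f.eval (μ j) = ∑ t : Fin (d + 1), μ j ^ (t : ℕ) * f.coeff t := by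
      rw [Polynomial.eval_eq_sum_range' hnd, Fin.sum_univ_eq_sum_range
        (fun t => μ j ^ t * f.coeff t)]
      exact Finset.sum_congr rfl fun i _ => mul_comm _ _
    rw [hps, ← heval, hsum]
    simp [Matrix.mulVec, dotProduct, Matrix.transpose_apply, hXs]
  · funext t
    simp only [Matrix.mulVec, dotProduct, Pi.smul_apply, smul_eq_mul, Finset.mul_sum]
    refine Finset.sum_congr rfl fun j _ => ?_
    rw [hXs, hYs, hps]
    by_cases h : μ j = lam
    · simp [h, pow_succ, mul_comm]
    · simp [h]
end

section
/- Let λ₁,…,λ_m be complex numbers with l distinct values among them, let d ≥ l, and let X♯, Y♯ be the associated (d+1)×m matrices of powers. If λ ∈ {λ₁,…,λ_m} and p ∈ ℂ^m lies in the row space of X♯ and satisfies Y♯ p = λ · X♯ p, then p is a scalar multiple of the vector p♯ = Σ_{j : λ_j = λ} e_j. In other words, for each generalized eigenvalue the right generalized eigenvectors of the pencil (X♯, Y♯) form a one-dimensional space. -/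
open Matrix Polynomial

/-- With X♯, Y♯ the (d+1)×m matrices of powers of λ₁,…,λ_m (l distinct
values, d ≥ l), if λ ∈ {λ₁,…,λ_m} and p lies in the row space of X♯ with
Y♯ p = λ · X♯ p, then p is a scalar multiple of p♯ = Σ_{j : λ_j = λ} e_j: the right
generalized eigenvectors belonging to each generalized eigenvalue form a
one-dimensional space. -/
theorem generalized_eigenvector_unique (m d : ℕ) (μ : Fin m → ℂ) (l : ℕ)
    (hl : l = (Finset.univ.image μ).card) (hd : l ≤ d)
    (Xs Ys : Matrix (Fin (d + 1)) (Fin m) ℂ)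
    (hXs : ∀ t j, Xs t j = μ j ^ (t : ℕ))
    (hYs : ∀ t j, Ys t j = μ j ^ ((t : ℕ) + 1))
    (lam : ℂ) (hlam : lam ∈ Set.range μ)
    (ps : Fin m → ℂ) (hps : ∀ j, ps j = if μ j = lam then 1 else 0)
    (p : Fin m → ℂ)
    (hrow : ∃ c : Fin (d + 1) → ℂ, p = Xs.transpose.mulVec c)
    (heig : Ys.mulVec p = lam • Xs.mulVec p) :
    ∃ c : ℂ, p = c • ps := by
  obtain ⟨cc, hcc⟩ := hrow
  have hconst : ∀ j k, μ j = μ k → p j = p k := by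
    intro j k h
    subst hcc
    simp only [mulVec, dotProduct, transpose_apply, hXs, h]
  have key : ∀ t : Fin (d+1), ∑ j, μ j ^ (t:ℕ) * ((μ j - lam) * p j) = 0 := by
    intro t
    have h := congrFun heig t
    simp only [mulVec, dotProduct, Pi.smul_apply, smul_eq_mul, hXs, hYs,
      Finset.mul_sum] at h
    have e : ∀ j : Fin m, μ j ^ (t:ℕ) * ((μ j - lam) * p j)
        = μ j ^ ((t:ℕ)+1) * p j - lam * (μ j ^ (t:ℕ) * p j) := by
      intro j; ring
    rw [Finset.sum_congr rfl (fun j _ => e j), Finset.sum_sub_distrib, h, sub_self]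
  have polysum : ∀ r : Polynomial ℂ, r.natDegree ≤ d →
      ∑ j, r.eval (μ j) * ((μ j - lam) * p j) = 0 := by
    intro r hr
    have he : ∀ j : Fin m, r.eval (μ j) = ∑ t ∈ Finset.range (d+1), r.coeff t * μ j ^ t :=
      fun j => Polynomial.eval_eq_sum_range' (Nat.lt_succ_of_le hr) _
    calc ∑ j, r.eval (μ j) * ((μ j - lam) * p j)
        = ∑ j, ∑ t ∈ Finset.range (d+1), r.coeff t * (μ j ^ t * ((μ j - lam) * p j)) := by
          refine Finset.sum_congr rfl fun j _ => ?_
          rw [he j, Finset.sum_mul]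
          exact Finset.sum_congr rfl fun t _ => by ring
      _ = ∑ t ∈ Finset.range (d+1), r.coeff t * ∑ j, μ j ^ t * ((μ j - lam) * p j) := by
          rw [Finset.sum_comm]
          exact Finset.sum_congr rfl fun t _ => (Finset.mul_sum _ _ _).symm
      _ = 0 := by
          refine Finset.sum_eq_zero fun t ht => ?_
          have hk := key ⟨t, Finset.mem_range.mp ht⟩
          simp only at hk
          rw [hk, mul_zero]
  obtain ⟨j1, hj1⟩ := hlam
  refine ⟨p j1, funext fun j => ?_⟩
  by_cases h : μ j = lam
  · rw [Pi.smul_apply, hps, if_pos h, smul_eq_mul, mul_one]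
    exact hconst j j1 (h.trans hj1.symm)
  · rw [Pi.smul_apply, hps, if_neg h, smul_eq_mul, mul_zero]
    set S := Finset.univ.image μ with hS
    set r : Polynomial ℂ := ∏ x ∈ S.erase (μ j), (X - C x) with hr
    have hdeg : r.natDegree ≤ d := by
      have hnd : r.natDegree = (S.erase (μ j)).card := by
        rw [hr, Polynomial.natDegree_prod _ _ (fun x _ => Polynomial.X_sub_C_ne_zero x)]
        simp [Polynomial.natDegree_X_sub_C]
      rw [hnd]
      calc (S.erase (μ j)).card ≤ S.card := Finset.card_erase_le
        _ = l := hl.symm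
        _ ≤ d := hd
    have h0 := polysum r hdeg
    rw [← Finset.sum_filter_add_sum_filter_not Finset.univ (fun j' => μ j' = μ j)] at h0
    have hz : ∑ j' ∈ Finset.univ.filter (fun j' => ¬ μ j' = μ j),
        r.eval (μ j') * ((μ j' - lam) * p j') = 0 := by
      refine Finset.sum_eq_zero fun j' hj' => ?_
      have hne : μ j' ≠ μ j := (Finset.mem_filter.mp hj').2
      have hev : r.eval (μ j') = 0 := by
        rw [hr, Polynomial.eval_prod]
        refine Finset.prod_eq_zero (Finset.mem_erase.mpr
          ⟨hne, Finset.mem_image_of_mem μ (Finset.mem_univ j')⟩) ?_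
        simp
      rw [hev, zero_mul]
    rw [hz, add_zero] at h0
    rw [Finset.sum_congr rfl (fun j' hj' => by
        rw [(Finset.mem_filter.mp hj').2, hconst j' j (Finset.mem_filter.mp hj').2]),
      Finset.sum_const, nsmul_eq_mul] at h0
    have hcard : ((Finset.univ.filter (fun j' => μ j' = μ j)).card : ℂ) ≠ 0 :=
      Nat.cast_ne_zero.mpr (Finset.card_pos.mpr ⟨j, by simp⟩).ne'
    have hrev : r.eval (μ j) ≠ 0 := by
      rw [hr, Polynomial.eval_prod]
      refine Finset.prod_ne_zero_iff.mpr fun x hx => ?_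
      have : x ≠ μ j := (Finset.mem_erase.mp hx).1
      simp [sub_ne_zero, this.symm]
    have hml : μ j - lam ≠ 0 := sub_ne_zero.mpr h
    rcases mul_eq_zero.mp h0 with hc | hc
    · exact absurd hc hcard
    rcases mul_eq_zero.mp hc with hc | hc
    · exact absurd hc hrev
    rcases mul_eq_zero.mp hc with hc | hc
    · exact absurd hc hml
    exact hc
end

section
/- Let λ₁,…,λ_m be complex numbers with l distinct values among them, let d ≥ l, and let X♯, Y♯ be the associated (d+1)×m matrices of powers. Then for λ ∈ ℂ, there exists a nonzero vector p ∈ ℂ^m lying in the row space of X♯ with Y♯ p = λ · X♯ p if and only if λ ∈ {λ₁,…,λ_m}. That is, the generalized eigenvalues of the matrix pencil (X♯, Y♯) are exactly the distinct values among λ₁,…,λ_m. -/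
open Matrix Polynomial

private lemma eval_fin_sum' {d : ℕ} (q : Polynomial ℂ) (hq : q.natDegree ≤ d) (x : ℂ) :
    q.eval x = ∑ t : Fin (d + 1), q.coeff t * x ^ (t : ℕ) := by
  rw [Fin.sum_univ_eq_sum_range (fun t => q.coeff t * x ^ t) (d + 1)]
  exact Polynomial.eval_eq_sum_range' (Nat.lt_succ_of_le hq) x

private lemma natDegree_prod_le' {d : ℕ} (S : Finset ℂ) (hS : S.card ≤ d) :
    (∏ a ∈ S, (X - C a)).natDegree ≤ d := by
  refine le_trans (Polynomial.natDegree_prod_le S _) ?_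
  calc ∑ a ∈ S, (X - C a).natDegree ≤ ∑ _a ∈ S, 1 := by
        refine Finset.sum_le_sum fun a _ => ?_
        simp [Polynomial.natDegree_X_sub_C]
    _ = S.card := by simp
    _ ≤ d := hS

/-- With X♯, Y♯ the (d+1)×m matrices of powers of λ₁,…,λ_m (l distinct
values, d ≥ l), for λ ∈ ℂ there exists a nonzero vector p in the row space of X♯
with Y♯ p = λ · X♯ p if and only if λ ∈ {λ₁,…,λ_m}: the generalized eigenvalues of
the pencil (X♯, Y♯) are exactly the distinct values among λ₁,…,λ_m. -/
theorem generalized_eigenvalues_characterization (m d : ℕ) (μ : Fin m → ℂ) (l : ℕ)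
    (hl : l = (Finset.univ.image μ).card) (hd : l ≤ d)
    (Xs Ys : Matrix (Fin (d + 1)) (Fin m) ℂ)
    (hXs : ∀ t j, Xs t j = μ j ^ (t : ℕ))
    (hYs : ∀ t j, Ys t j = μ j ^ ((t : ℕ) + 1))
    (lam : ℂ) :
    (∃ p : Fin m → ℂ, p ≠ 0 ∧ (∃ c : Fin (d + 1) → ℂ, p = Xs.transpose.mulVec c) ∧
      Ys.mulVec p = lam • Xs.mulVec p) ↔ lam ∈ Set.range μ := by
  subst hl
  set S : Finset ℂ := Finset.univ.image μ with hSdef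
  constructor
  · rintro ⟨p, hp0, ⟨c, hpc⟩, heig⟩
    by_contra hlam
    -- p j = Q (μ j) for a "polynomial function" Q
    set Q : ℂ → ℂ := fun x => ∑ t : Fin (d + 1), c t * x ^ (t : ℕ) with hQdef
    have hpQ : ∀ j, p j = Q (μ j) := by
      intro j
      rw [hpc]
      simp only [Matrix.mulVec, dotProduct, Matrix.transpose_apply, hXs, hQdef]
      exact Finset.sum_congr rfl fun t _ => mul_comm _ _
    -- the key orthogonality relations
    have key : ∀ t : Fin (d + 1),
        ∑ j, μ j ^ (t : ℕ) * ((μ j - lam) * p j) = 0 := by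
      intro t
      have h1 := congrFun heig t
      simp only [Matrix.mulVec, dotProduct, hXs, hYs, Pi.smul_apply, smul_eq_mul,
        Finset.mul_sum] at h1
      have : ∑ j, μ j ^ (t : ℕ) * ((μ j - lam) * p j)
          = (∑ j, μ j ^ ((t : ℕ) + 1) * p j) - ∑ j, lam * (μ j ^ (t : ℕ) * p j) := by
        rw [← Finset.sum_sub_distrib]
        exact Finset.sum_congr rfl fun j _ => by ring
      rw [this, h1, sub_self]
    -- every value b of μ has Q b = 0
    have hQzero : ∀ b ∈ S, Q b = 0 := by
      intro b hb
      set L : Polynomial ℂ := ∏ a ∈ S.erase b, (X - C a) with hLdef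
      have hLdeg : L.natDegree ≤ d :=
        natDegree_prod_le' _ (le_trans (Finset.card_le_card (Finset.erase_subset b S)) hd)
      have key2 : ∑ j, L.eval (μ j) * ((μ j - lam) * p j) = 0 := by
        calc ∑ j, L.eval (μ j) * ((μ j - lam) * p j)
            = ∑ j, ∑ t : Fin (d + 1), L.coeff t * (μ j ^ (t : ℕ) * ((μ j - lam) * p j)) := by
              refine Finset.sum_congr rfl fun j _ => ?_
              rw [eval_fin_sum' L hLdeg, Finset.sum_mul]
              exact Finset.sum_congr rfl fun t _ => by ring
          _ = ∑ t : Fin (d + 1), L.coeff t * ∑ j, μ j ^ (t : ℕ) * ((μ j - lam) * p j) := by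
              rw [Finset.sum_comm]
              exact Finset.sum_congr rfl fun t _ => by rw [Finset.mul_sum]
          _ = 0 := by simp [key]
      -- each term vanishes unless μ j = b
      have h1 : ∀ j, L.eval (μ j) * ((μ j - lam) * p j) =
          if μ j = b then L.eval b * ((b - lam) * Q b) else 0 := by
        intro j
        by_cases h : μ j = b
        · simp [h, hpQ j]
        · have hmem : μ j ∈ S.erase b :=
            Finset.mem_erase.mpr ⟨h, Finset.mem_image_of_mem μ (Finset.mem_univ j)⟩
          have hL0 : L.eval (μ j) = 0 := by
            rw [hLdef, Polynomial.eval_prod]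
            exact Finset.prod_eq_zero hmem (by simp)
          simp [h, hL0]
      have hcard : ∑ j, L.eval (μ j) * ((μ j - lam) * p j)
          = (Finset.univ.filter (fun j => μ j = b)).card • (L.eval b * ((b - lam) * Q b)) := by
        rw [Finset.sum_congr rfl fun j _ => h1 j, Finset.sum_ite, Finset.sum_const,
          Finset.sum_const_zero, add_zero]
      rw [key2] at hcard
      obtain ⟨j0, -, hj0⟩ := Finset.mem_image.mp hb
      have hcardpos : (Finset.univ.filter (fun j => μ j = b)).card ≠ 0 := by
        rw [Finset.card_ne_zero]
        exact ⟨j0, Finset.mem_filter.mpr ⟨Finset.mem_univ j0, hj0⟩⟩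
      have hLb : L.eval b ≠ 0 := by
        rw [hLdef, Polynomial.eval_prod]
        refine Finset.prod_ne_zero_iff.mpr fun a ha => ?_
        simpa [sub_eq_zero] using ((Finset.mem_erase.mp ha).1).symm
      have hblam : b - lam ≠ 0 := by
        intro h
        exact hlam ⟨j0, by rw [hj0]; linear_combination h⟩
      have := hcard.symm
      rw [nsmul_eq_mul] at this
      rcases mul_eq_zero.mp this with h | h
      · exact absurd (Nat.cast_eq_zero.mp h) hcardpos
      · rcases mul_eq_zero.mp h with h | h
        · exact absurd h hLb
        · rcases mul_eq_zero.mp h with h | h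
          · exact absurd h hblam
          · exact h
    -- hence p = 0, contradiction
    apply hp0
    funext j
    rw [hpQ j, hQzero (μ j) (Finset.mem_image_of_mem μ (Finset.mem_univ j))]
    rfl
  · rintro ⟨j0, hj0⟩
    have hlamS : lam ∈ S := by rw [← hj0]; exact Finset.mem_image_of_mem μ (Finset.mem_univ j0)
    set q : Polynomial ℂ := ∏ a ∈ S.erase lam, (X - C a) with hqdef
    have hqdeg : q.natDegree ≤ d :=
      natDegree_prod_le' _ (le_trans (Finset.card_le_card (Finset.erase_subset lam S)) hd)
    refine ⟨fun j => q.eval (μ j), ?_, ⟨fun t => q.coeff t, ?_⟩, ?_⟩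
    · intro h
      have h0 := congrFun h j0
      rw [hj0] at h0
      have : q.eval lam ≠ 0 := by
        rw [hqdef, Polynomial.eval_prod]
        refine Finset.prod_ne_zero_iff.mpr fun a ha => ?_
        simpa [sub_eq_zero] using ((Finset.mem_erase.mp ha).1).symm
      exact this h0
    · funext j
      simp only [Matrix.mulVec, dotProduct, Matrix.transpose_apply, hXs]
      rw [eval_fin_sum' q hqdeg]
      exact Finset.sum_congr rfl fun t _ => mul_comm _ _
    · funext t
      simp only [Matrix.mulVec, dotProduct, hXs, hYs, Pi.smul_apply, smul_eq_mul,
        Finset.mul_sum]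
      refine Finset.sum_congr rfl fun j _ => ?_
      have hmul : μ j * q.eval (μ j) = lam * q.eval (μ j) := by
        by_cases h : μ j = lam
        · rw [h]
        · have hmem : μ j ∈ S.erase lam :=
            Finset.mem_erase.mpr ⟨h, Finset.mem_image_of_mem μ (Finset.mem_univ j)⟩
          have hq0 : q.eval (μ j) = 0 := by
            rw [hqdef, Polynomial.eval_prod]
            exact Finset.prod_eq_zero hmem (by simp)
          rw [hq0, mul_zero, mul_zero]
      calc μ j ^ ((t : ℕ) + 1) * q.eval (μ j) = μ j ^ (t : ℕ) * (μ j * q.eval (μ j)) := by ring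
        _ = μ j ^ (t : ℕ) * (lam * q.eval (μ j)) := by rw [hmul]
        _ = lam * (μ j ^ (t : ℕ) * q.eval (μ j)) := by ring
end

section
/- Let P ≥ 1 and, for each j = 1,…,P, let l_j ≥ 1, let λ_{j1},…,λ_{jl_j} ∈ ℂ be pairwise distinct, let N_j ≥ l_j, and let Ξ_j ∈ ℂ^{l_j × N_j} have rank l_j. Set m = Σ_j l_j, let l be the number of distinct values among all λ_{jk} (over all j, k), let d ≥ m, let X♯ ∈ ℂ^{(d+1)×m} be the matrix of powers of the concatenated list of all λ_{jk}, and let D = blockdiag(Ξ₁,…,Ξ_P). Then the matrix X = X♯D ∈ ℂ^{(d+1) × ΣN_j} has rank exactly l. -/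
/-!
Every block `Ξ_j` has full row rank, so `D = blockdiag(Ξ₁, …, Ξ_P)` is surjective as a linear map
and multiplying by it on the right does not change the rank: `rank (X♯ D) = rank X♯`. Repeated
columns of `X♯` do not change its column span, so `rank X♯` is the rank of the matrix of powers of
the `l` distinct values. Since `l ≤ m ≤ d + 1`, its first `l` rows form an invertible Vandermonde
matrix, hence that rank is `l`.
-/

open Matrix

namespace Matrix

variable {m n o ι R K : Type*}

def powerMatrix [Monoid K] (d : ℕ) (v : ι → K) : Matrix (Fin (d + 1)) ι K :=
  of fun t i => v i ^ (t : ℕ)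

section CommSemiring

variable [CommSemiring R]

theorem rank_mul_eq_left_of_mulVecLin_surjective [Fintype n] [Fintype o] (A : Matrix m n R)
    {B : Matrix n o R} (hB : Function.Surjective B.mulVecLin) : (A * B).rank = A.rank := by
  rw [rank, rank, mulVecLin_mul,
    LinearMap.range_comp_of_range_eq_top _ (LinearMap.range_eq_top.mpr hB)]

theorem rank_eq_rank_of_range_col_eq {n' : Type*} [Fintype n] [Fintype n']
    {A : Matrix m n R} {B : Matrix m n' R} (h : Set.range A.col = Set.range B.col) :
    A.rank = B.rank := by
  rw [rank_eq_finrank_span_cols, rank_eq_finrank_span_cols, h]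

variable {P : Type*} [Fintype P] [DecidableEq P] {r c : P → Type*} [∀ j, Fintype (c j)]

theorem blockDiagonal'_mulVec_apply (M : ∀ j, Matrix (r j) (c j) R) (v : (Σ j, c j) → R)
    (j : P) (k : r j) :
    (blockDiagonal' M *ᵥ v) ⟨j, k⟩ = (M j *ᵥ fun i => v ⟨j, i⟩) k := by
  rw [mulVec, dotProduct, ← Finset.univ_sigma_univ, Finset.sum_sigma,
    Finset.sum_eq_single j (fun j' _ hj' => by simp [blockDiagonal'_apply_ne M _ _ (Ne.symm hj')])
      (by simp)]
  simp [mulVec, dotProduct, blockDiagonal'_apply_eq]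

theorem mulVecLin_blockDiagonal'_surjective {M : ∀ j, Matrix (r j) (c j) R}
    (hM : ∀ j, Function.Surjective (M j).mulVecLin) :
    Function.Surjective (blockDiagonal' M).mulVecLin := by
  intro w
  choose v hv using fun j => hM j fun k => w ⟨j, k⟩
  refine ⟨fun q => v q.1 q.2, funext fun ⟨j, k⟩ => ?_⟩
  simpa [blockDiagonal'_mulVec_apply] using congrFun (hv j) k

end CommSemiring

section Field

variable [Field K]

theorem mulVecLin_surjective_of_rank_eq_card [Fintype n] [Fintype o] {B : Matrix n o K}
    (hB : B.rank = Fintype.card n) : Function.Surjective B.mulVecLin := by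
  rw [← LinearMap.range_eq_top]
  exact Submodule.eq_top_of_finrank_eq (by rw [← rank, hB, Module.finrank_fintype_fun_eq_card])

theorem rank_powerMatrix_of_injective [Fintype ι] {d : ℕ} {v : ι → K}
    (hv : Function.Injective v) (hcard : Fintype.card ι ≤ d + 1) :
    (powerMatrix d v).rank = Fintype.card ι := by
  set e := (Fintype.equivFin ι).symm
  have hsub : (powerMatrix d v).submatrix (Fin.castLE hcard) e = (vandermonde (v ∘ e))ᵀ := rfl
  refine le_antisymm (rank_le_card_width _) ?_
  calc Fintype.card ι = (vandermonde (v ∘ e))ᵀ.rank := by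
        rw [rank_transpose, rank_of_isUnit, Fintype.card_fin]
        rw [isUnit_iff_isUnit_det, isUnit_iff_ne_zero, det_vandermonde_ne_zero_iff]
        exact hv.comp e.injective
    _ ≤ (powerMatrix d v).rank := hsub ▸ rank_submatrix_le _ _ _

theorem rank_powerMatrix [DecidableEq K] [Fintype ι] {d : ℕ} (v : ι → K)
    (hcard : (Finset.univ.image v).card ≤ d + 1) :
    (powerMatrix d v).rank = (Finset.univ.image v).card := by
  rw [← Fintype.card_coe] at hcard ⊢
  rw [← rank_powerMatrix_of_injective Subtype.val_injective hcard]
  apply rank_eq_rank_of_range_col_eq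
  ext x
  constructor
  · rintro ⟨i, rfl⟩
    exact ⟨⟨v i, Finset.mem_image_of_mem v (Finset.mem_univ i)⟩, rfl⟩
  · rintro ⟨⟨s, hs⟩, rfl⟩
    obtain ⟨i, -, rfl⟩ := Finset.mem_image.mp hs
    exact ⟨i, rfl⟩

end Field

end Matrix

theorem block_pencil_rank_general (P : ℕ)
    (lp : Fin P → ℕ)
    (lam : ∀ j : Fin P, Fin (lp j) → ℂ)
    (N : Fin P → ℕ)
    (Ξ : ∀ j : Fin P, Matrix (Fin (lp j)) (Fin (N j)) ℂ)
    (hrank : ∀ j, (Ξ j).rank = lp j)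
    (l : ℕ)
    (hl : l = (Finset.univ.image fun q : (j : Fin P) × Fin (lp j) => lam q.1 q.2).card)
    (d : ℕ) (hd : (∑ j, lp j) ≤ d)
    (Xs : Matrix (Fin (d + 1)) ((j : Fin P) × Fin (lp j)) ℂ)
    (hXs : ∀ t j k, Xs t ⟨j, k⟩ = lam j k ^ (t : ℕ)) :
    (Xs * Matrix.blockDiagonal' Ξ).rank = l := by
  set v := fun q : (j : Fin P) × Fin (lp j) => lam q.1 q.2
  have hXs_eq : Xs = powerMatrix d v := by
    ext t ⟨j, k⟩
    exact hXs t j k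
  have hD : Function.Surjective (blockDiagonal' Ξ).mulVecLin :=
    mulVecLin_blockDiagonal'_surjective fun j =>
      mulVecLin_surjective_of_rank_eq_card (by rw [hrank, Fintype.card_fin])
  have hcard : (Finset.univ.image v).card ≤ d + 1 :=
    calc (Finset.univ.image v).card ≤ Fintype.card ((j : Fin P) × Fin (lp j)) :=
          Finset.card_image_le
      _ = ∑ j, lp j := by simp
      _ ≤ d + 1 := by omega
  rw [rank_mul_eq_left_of_mulVecLin_surjective Xs hD, hXs_eq, rank_powerMatrix v hcard, hl]

/-- With X♯ the matrix of powers of the concatenated frequencies λ_{jk}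
(pairwise distinct within each block), Ξ_j ∈ ℂ^{l_j × N_j} of rank l_j,
D = blockdiag(Ξ₁,…,Ξ_P), l the number of distinct values among all λ_{jk}, and
d ≥ Σ l_j: the matrix X = X♯·D has rank exactly l. -/
theorem block_pencil_rank (P : ℕ) (hP : 1 ≤ P)
    (lp : Fin P → ℕ) (hlp : ∀ j, 1 ≤ lp j)
    (lam : ∀ j : Fin P, Fin (lp j) → ℂ) (hinj : ∀ j, Function.Injective (lam j))
    (N : Fin P → ℕ) (hN : ∀ j, lp j ≤ N j)
    (Ξ : ∀ j : Fin P, Matrix (Fin (lp j)) (Fin (N j)) ℂ)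
    (hrank : ∀ j, (Ξ j).rank = lp j)
    (l : ℕ)
    (hl : l = (Finset.univ.image fun q : (j : Fin P) × Fin (lp j) => lam q.1 q.2).card)
    (d : ℕ) (hd : (∑ j, lp j) ≤ d)
    (Xs : Matrix (Fin (d + 1)) ((j : Fin P) × Fin (lp j)) ℂ)
    (hXs : ∀ t j k, Xs t ⟨j, k⟩ = lam j k ^ (t : ℕ)) :
    (Xs * Matrix.blockDiagonal' Ξ).rank = l :=
  block_pencil_rank_general P lp lam N Ξ hrank l hl d hd Xs hXs
end

section
/- Let U ∈ ℂ^{m×r} and V ∈ ℂ^{M×r} satisfy U*U = I and V*V = I, let Σ ∈ ℂ^{r×r} be invertible, let L̃ ∈ ℂ^{r×r}, and set X = U Σ V* and Y = U Σ L̃ V*. Suppose L̃ = W̃ Λ̄ W̃⁻¹ with W̃ ∈ ℂ^{r×r} invertible and Λ̄ = diag(λ̄₁,…,λ̄_r) diagonal. Then for each j, the j-th column p_j of V W̃ is nonzero and satisfies (Y − λ̄_j X) p_j = 0; that is, the columns of V W̃ are right generalized eigenvectors of the matrix pencil (X, Y) with eigenvalues λ̄₁,…,λ̄_r. -/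
open Matrix

/-- Let U, V have orthonormal columns (U*U = I, V*V = I), Σ be
invertible, X = U Σ V* and Y = U Σ L̃ V*, and L̃ = W̃ Λ̄ W̃⁻¹ with W̃ invertible and
Λ̄ = diag(λ̄₁,…,λ̄_r). Then for each j, the j-th column of V W̃ is nonzero and
satisfies (Y − λ̄_j X) p_j = 0: the columns of V W̃ are right generalized
eigenvectors of the pencil (X, Y) with eigenvalues λ̄₁,…,λ̄_r. -/
theorem columns_VW_right_generalized_eigenvectors (m M r : ℕ)
    (U : Matrix (Fin m) (Fin r) ℂ) (V : Matrix (Fin M) (Fin r) ℂ)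
    (hU : Uᴴ * U = 1) (hV : Vᴴ * V = 1)
    (S : Matrix (Fin r) (Fin r) ℂ) (hS : IsUnit S.det)
    (L W : Matrix (Fin r) (Fin r) ℂ) (hW : IsUnit W.det)
    (lam : Fin r → ℂ)
    (hL : L = W * Matrix.diagonal lam * W⁻¹)
    (X Y : Matrix (Fin m) (Fin M) ℂ)
    (hX : X = U * S * Vᴴ) (hY : Y = U * S * L * Vᴴ)
    (j : Fin r) :
    (fun i => (V * W) i j) ≠ 0 ∧
      (Y - lam j • X).mulVec (fun i => (V * W) i j) = 0 := by
  have hWinv : W⁻¹ * W = 1 := nonsing_inv_mul W hW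
  have hcol : (fun i => (V * W) i j) = (V * W) *ᵥ Pi.single j 1 := by
    ext i; simp
  constructor
  · rw [hcol]
    intro h
    have h2 : Vᴴ *ᵥ ((V * W) *ᵥ Pi.single j 1) = 0 := by rw [h, mulVec_zero]
    rw [mulVec_mulVec, ← Matrix.mul_assoc, hV, Matrix.one_mul] at h2
    have h3 : W⁻¹ *ᵥ (W *ᵥ Pi.single j 1) = 0 := by rw [h2, mulVec_zero]
    rw [mulVec_mulVec, hWinv, one_mulVec] at h3
    have := congrFun h3 j
    simp at this
  · have key : (Y - lam j • X) * (V * W) = (U * S * W) * (diagonal lam - lam j • 1) := by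
      rw [hX, hY, hL, Matrix.sub_mul, Matrix.mul_sub, Matrix.smul_mul, Matrix.mul_smul,
        Matrix.mul_one]
      congr 1
      · calc U * S * (W * diagonal lam * W⁻¹) * Vᴴ * (V * W)
            = U * S * W * diagonal lam * (W⁻¹ * ((Vᴴ * V) * W)) := by
              simp only [Matrix.mul_assoc]
          _ = U * S * W * diagonal lam := by
              rw [hV, Matrix.one_mul, hWinv, Matrix.mul_one]
      · calc lam j • (U * S * Vᴴ * (V * W))
            = lam j • (U * S * ((Vᴴ * V) * W)) := by
              simp only [Matrix.mul_assoc]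
          _ = lam j • (U * S * W) := by rw [hV, Matrix.one_mul]
    rw [hcol, mulVec_mulVec, key, ← mulVec_mulVec]
    have : (diagonal lam - lam j • 1) *ᵥ Pi.single j 1 = 0 := by
      rw [sub_mulVec, smul_mulVec, one_mulVec, diagonal_mulVec_single]
      ext i
      by_cases hi : i = j <;> simp [hi, Pi.single_apply]
    rw [this, mulVec_zero]
end

section
/- Let U ∈ ℂ^{m×r} and V ∈ ℂ^{M×r} satisfy U*U = I and V*V = I, let Σ ∈ ℂ^{r×r} be invertible, let L̃ ∈ ℂ^{r×r}, and set X = U Σ V* and Y = U Σ L̃ V*. Suppose L̃ = W̃ Λ̄ W̃⁻¹ with W̃ ∈ ℂ^{r×r} invertible and Λ̄ = diag(λ̄₁,…,λ̄_r) diagonal. Then for each j, the j-th row q_j* of the matrix W̃⁻¹ Σ⁻¹ U* is nonzero and satisfies q_j* (Y − λ̄_j X) = 0; that is, the rows of W̃⁻¹ Σ⁻¹ U* are left generalized eigenvectors of the matrix pencil (X, Y) with eigenvalues λ̄₁,…,λ̄_r. -/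
open Matrix

/-- Let U, V have orthonormal columns (U*U = I, V*V = I), Σ be
invertible, X = U Σ V* and Y = U Σ L̃ V*, and L̃ = W̃ Λ̄ W̃⁻¹ with W̃ invertible and
Λ̄ = diag(λ̄₁,…,λ̄_r). Then for each j, the j-th row of W̃⁻¹ Σ⁻¹ U* is nonzero and
satisfies q_j* (Y − λ̄_j X) = 0: the rows of W̃⁻¹ Σ⁻¹ U* are left generalized
eigenvectors of the pencil (X, Y) with eigenvalues λ̄₁,…,λ̄_r. -/
theorem rows_left_generalized_eigenvectors (m M r : ℕ)
    (U : Matrix (Fin m) (Fin r) ℂ) (V : Matrix (Fin M) (Fin r) ℂ)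
    (hU : Uᴴ * U = 1) (hV : Vᴴ * V = 1)
    (S : Matrix (Fin r) (Fin r) ℂ) (hS : IsUnit S.det)
    (L W : Matrix (Fin r) (Fin r) ℂ) (hW : IsUnit W.det)
    (lam : Fin r → ℂ)
    (hL : L = W * Matrix.diagonal lam * W⁻¹)
    (X Y : Matrix (Fin m) (Fin M) ℂ)
    (hX : X = U * S * Vᴴ) (hY : Y = U * S * L * Vᴴ)
    (j : Fin r) :
    (fun i => (W⁻¹ * S⁻¹ * Uᴴ) j i) ≠ 0 ∧
      Matrix.vecMul (fun i => (W⁻¹ * S⁻¹ * Uᴴ) j i) (Y - lam j • X) = 0 := by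
  have hS' : S⁻¹ * S = 1 := Matrix.nonsing_inv_mul S hS
  have hW' : W⁻¹ * W = 1 := Matrix.nonsing_inv_mul W hW
  have cancelU : ∀ (Z : Matrix (Fin r) (Fin M) ℂ), Uᴴ * (U * Z) = Z := by
    intro Z; rw [← Matrix.mul_assoc, hU, Matrix.one_mul]
  have cancelS : ∀ (Z : Matrix (Fin r) (Fin M) ℂ), S⁻¹ * (S * Z) = Z := by
    intro Z; rw [← Matrix.mul_assoc, hS', Matrix.one_mul]
  have cancelW : ∀ (Z : Matrix (Fin r) (Fin M) ℂ), W⁻¹ * (W * Z) = Z := by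
    intro Z; rw [← Matrix.mul_assoc, hW', Matrix.one_mul]
  set Q : Matrix (Fin r) (Fin m) ℂ := W⁻¹ * S⁻¹ * Uᴴ with hQ
  have hrow : ∀ (A : Matrix (Fin m) (Fin M) ℂ),
      Matrix.vecMul (fun i => Q j i) A = fun i => (Q * A) j i := by
    intro A; funext i
    simp [Matrix.vecMul, Matrix.mul_apply, dotProduct]
  have key : Q * (Y - lam j • X)
      = Matrix.diagonal lam * (W⁻¹ * Vᴴ) - lam j • (W⁻¹ * Vᴴ) := by
    subst hX hY hL
    rw [Matrix.mul_sub, Matrix.mul_smul]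
    congr 1
    · calc Q * (U * S * (W * Matrix.diagonal lam * W⁻¹) * Vᴴ)
          = W⁻¹ * (S⁻¹ * (Uᴴ * (U * (S * (W * (Matrix.diagonal lam * (W⁻¹ * Vᴴ))))))) := by
            simp only [hQ, Matrix.mul_assoc]
        _ = Matrix.diagonal lam * (W⁻¹ * Vᴴ) := by
            rw [cancelU, cancelS, cancelW]
    · have h2 : Q * (U * S * Vᴴ) = W⁻¹ * Vᴴ := by
        calc Q * (U * S * Vᴴ)
            = W⁻¹ * (S⁻¹ * (Uᴴ * (U * (S * Vᴴ)))) := by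
              simp only [hQ, Matrix.mul_assoc]
          _ = W⁻¹ * Vᴴ := by rw [cancelU, cancelS]
      rw [h2]
  constructor
  · intro h
    have hrowQ : Q j = 0 := by funext i; exact congrFun h i
    have h1 : (Q * (U * (S * W))) j j = (1 : Matrix (Fin r) (Fin r) ℂ) j j := by
      rw [hQ]
      calc (W⁻¹ * S⁻¹ * Uᴴ * (U * (S * W))) j j
          = (W⁻¹ * (S⁻¹ * (Uᴴ * (U * (S * W))))) j j := by
            simp only [Matrix.mul_assoc]
        _ = (1 : Matrix (Fin r) (Fin r) ℂ) j j := by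
            rw [← Matrix.mul_assoc Uᴴ U, hU, Matrix.one_mul,
              ← Matrix.mul_assoc S⁻¹ S, hS', Matrix.one_mul, hW']
    rw [Matrix.mul_apply] at h1
    simp [hrowQ] at h1
  · rw [hrow]
    funext i
    rw [key]
    simp [Matrix.diagonal_mul]
end
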